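/- arXiv:2102.11974 — 3 statements merged into one kernel-verified Lean document; each statement's English description precedes it below -/
import Mathlib

section
/- Let G be a finite connected simple graph on a vertex set V with at least two vertices and a distinguished sink vertex s ∈ V, and let z : V → ℕ be a sandpile configuration. If L₁ and L₂ are two complete legal toppling sequences (with sink s) from z, then the final configurations obtained by performing the topplings of L₁ and of L₂ coincide: the stable configuration reached depends solely on the initial configuration, independently of the order in which the topplings are performed (Abelian property). -/
variable {V : Type*}

/-- The toppling operator: the unstable vertex `i` sends one particle to each of
its neighbours, losing `deg i` particles itself. -/
def topple (G : SimpleGraph V) [G.LocallyFinite] [DecidableEq V] [DecidableRel G.Adj]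
    (z : V → ℕ) (i : V) : V → ℕ :=
  fun j => if j = i then z i - G.degree i else if G.Adj i j then z j + 1 else z j

/-- A legal toppling sequence (with sink `s`) from `z`: every toppled vertex is
different from `s` and is unstable in the configuration reached so far. -/
def LegalSeq (G : SimpleGraph V) [G.LocallyFinite] [DecidableEq V] [DecidableRel G.Adj]
    (s : V) : (V → ℕ) → List V → Prop
  | _, [] => True
  | z, i :: L => i ≠ s ∧ G.degree i ≤ z i ∧ LegalSeq G s (topple G z i) L

/-!
Toppling a vertex only adds grains at the other vertices, so a vertex unstable in `z`
stays unstable until it is toppled, and two unstable vertices can be toppled in either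
order. Hence the first vertex of one complete legal sequence occurs in the other one and
can be moved to its front without changing legality or the result; induction on the
first sequence finishes the argument.
-/

section Toppling

variable [DecidableEq V] (G : SimpleGraph V) [G.LocallyFinite] [DecidableRel G.Adj]

lemma le_topple_of_ne (z : V → ℕ) {i j : V} (h : i ≠ j) : z i ≤ topple G z j i := by
  simp only [topple, if_neg h]
  split_ifs <;> omega

lemma topple_comm (z : V → ℕ) {i j : V} (hij : i ≠ j)
    (hi : G.degree i ≤ z i) (hj : G.degree j ≤ z j) :
    topple G (topple G z i) j = topple G (topple G z j) i := by
  funext k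
  rcases eq_or_ne k i with rfl | hki
  · simp only [topple, hij, hij.symm, if_true, if_false]
    split_ifs <;> omega
  rcases eq_or_ne k j with rfl | hkj
  · simp only [topple, hij, hij.symm, if_true, if_false]
    split_ifs <;> omega
  simp only [topple, hki, hkj, if_false]
  split_ifs <;> omega

lemma le_foldl_topple_of_not_mem (z : V → ℕ) {i : V} {L : List V} (h : i ∉ L) :
    z i ≤ L.foldl (topple G) z i := by
  induction L generalizing z with
  | nil => simp
  | cons j M ih =>
    rw [List.mem_cons, not_or] at h
    exact (le_topple_of_ne G z h.1).trans (ih _ h.2)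

lemma mem_of_foldl_topple_lt {z : V → ℕ} {i : V} {L : List V}
    (hi : G.degree i ≤ z i) (hstable : L.foldl (topple G) z i < G.degree i) : i ∈ L := by
  by_contra h
  exact (hi.trans (le_foldl_topple_of_not_mem G z h)).not_gt hstable

variable {G} {s : V}

lemma LegalSeq.cons_erase {z : V → ℕ} {i : V} {L : List V} (hL : LegalSeq G s z L)
    (his : i ≠ s) (hi : G.degree i ≤ z i) (hmem : i ∈ L) :
    LegalSeq G s z (i :: L.erase i) ∧
      (i :: L.erase i).foldl (topple G) z = L.foldl (topple G) z := by
  induction L generalizing z with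
  | nil => simp at hmem
  | cons j M ih =>
    by_cases hji : j = i
    · subst hji
      simpa using hL
    obtain ⟨hjs, hj, hM⟩ := hL
    have hmem' : i ∈ M := (List.mem_cons.1 hmem).resolve_left (Ne.symm hji)
    obtain ⟨⟨-, -, hrest⟩, hfold⟩ :=
      ih hM (hi.trans (le_topple_of_ne G z (Ne.symm hji))) hmem'
    have hcomm := topple_comm G z (Ne.symm hji) hi hj
    rw [List.erase_cons_tail (by simpa using hji)]
    simp only [List.foldl_cons] at hfold ⊢
    refine ⟨⟨his, hi, hjs, hj.trans (le_topple_of_ne G z hji), ?_⟩, ?_⟩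
    · rwa [hcomm]
    · rwa [hcomm]

theorem LegalSeq.foldl_topple_eq {z : V → ℕ} {L₁ L₂ : List V}
    (h₁ : LegalSeq G s z L₁) (h₂ : LegalSeq G s z L₂)
    (hc₁ : ∀ v, v ≠ s → L₁.foldl (topple G) z v < G.degree v)
    (hc₂ : ∀ v, v ≠ s → L₂.foldl (topple G) z v < G.degree v) :
    L₁.foldl (topple G) z = L₂.foldl (topple G) z := by
  induction L₁ generalizing z L₂ with
  | nil =>
    cases L₂ with
    | nil => rfl
    | cons j M => exact absurd h₂.2.1 (hc₁ j h₂.1).not_ge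
  | cons i M₁ ih =>
    obtain ⟨his, hi, hM₁⟩ := h₁
    obtain ⟨⟨-, -, hrest⟩, hfold⟩ :=
      h₂.cons_erase his hi (mem_of_foldl_topple_lt G hi (hc₂ i his))
    simp only [List.foldl_cons] at hfold hc₁ ⊢
    rw [← hfold] at hc₂ ⊢
    exact ih hM₁ hrest hc₁ hc₂

end Toppling

theorem abelian_final_config_general [Fintype V] [DecidableEq V]
    (G : SimpleGraph V) [DecidableRel G.Adj] (s : V)
    (z : V → ℕ) (L₁ L₂ : List V)
    (h₁ : LegalSeq G s z L₁) (h₂ : LegalSeq G s z L₂)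
    (hc₁ : ∀ v, v ≠ s → L₁.foldl (topple G) z v < G.degree v)
    (hc₂ : ∀ v, v ≠ s → L₂.foldl (topple G) z v < G.degree v) :
    L₁.foldl (topple G) z = L₂.foldl (topple G) z :=
  h₁.foldl_topple_eq h₂ hc₁ hc₂

/-- Abelian property: on a finite connected simple graph with at least two
vertices and a sink `s`, any two complete legal toppling sequences from the same
initial configuration produce the same final stable configuration. -/
theorem abelian_final_config [Fintype V] [DecidableEq V]
    (G : SimpleGraph V) [DecidableRel G.Adj]
    (hconn : G.Connected) (hcard : 1 < Fintype.card V) (s : V)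
    (z : V → ℕ) (L₁ L₂ : List V)
    (h₁ : LegalSeq G s z L₁) (h₂ : LegalSeq G s z L₂)
    (hc₁ : ∀ v, v ≠ s → L₁.foldl (topple G) z v < G.degree v)
    (hc₂ : ∀ v, v ≠ s → L₂.foldl (topple G) z v < G.degree v) :
    L₁.foldl (topple G) z = L₂.foldl (topple G) z :=
  abelian_final_config_general G s z L₁ L₂ h₁ h₂ hc₁ hc₂
end

section
/- Let G be a finite connected simple graph on a vertex set V with at least two vertices and a distinguished sink vertex s ∈ V. Then for every sandpile configuration z : V → ℕ there is no infinite legal toppling sequence (with sink s) from z; consequently, every configuration stabilizes after a finite number of topplings, i.e., there exists a complete legal toppling sequence from z whose final configuration is stable at every vertex other than s. -/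
variable {V : Type*}

/-- The configuration obtained from `z` after performing the first `n` topplings
of the infinite sequence of vertices `f`. -/
def confSeq (G : SimpleGraph V) [G.LocallyFinite] [DecidableEq V] [DecidableRel G.Adj]
    (z : V → ℕ) (f : ℕ → V) : ℕ → V → ℕ
  | 0 => z
  | n + 1 => topple G (confSeq G z f n) (f n)

/-!
Toppling a legal vertex conserves the total number of chips, so along an infinite legal
sequence every vertex holds at most `∑ v, z v` chips. A vertex that stops toppling keeps
gaining a chip each time a neighbour topples, so the neighbours of a vertex toppled infinitely
often are toppled infinitely often as well. By connectivity the sink would then be toppled,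
which a legal sequence never does. Hence the legal-toppling relation is well founded, and
well-founded induction produces a complete legal sequence.
-/

open Finset

theorem SimpleGraph.Reachable.of_forall_adj {G : SimpleGraph V} {P : V → Prop}
    (hP : ∀ ⦃a b⦄, G.Adj a b → P a → P b) {u v : V} (h : G.Reachable u v) (hu : P u) :
    P v := by
  rw [G.reachable_iff_reflTransGen] at h
  induction h with
  | refl => exact hu
  | tail _ hab ih => exact hP hab ih

section Toppling

variable {G : SimpleGraph V} [DecidableEq V] [DecidableRel G.Adj]

theorem topple_apply_self [G.LocallyFinite] (z : V → ℕ) (i : V) :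
    topple G z i i = z i - G.degree i := by
  simp [topple]

theorem topple_apply_of_ne [G.LocallyFinite] (z : V → ℕ) {i j : V} (hj : j ≠ i) :
    topple G z i j = z j + if G.Adj i j then 1 else 0 := by
  by_cases h : G.Adj i j <;> simp [topple, hj, h]

theorem sum_topple [Fintype V] {z : V → ℕ} {i : V} (hi : G.degree i ≤ z i) :
    ∑ j, topple G z i j = ∑ j, z j := by
  have hsplit (w : V → ℕ) : ∑ j, w j = w i + ∑ j ∈ univ.erase i, w j :=
    (add_sum_erase _ _ (mem_univ i)).symm
  have hnbrs : (univ.erase i).filter (G.Adj i) = G.neighborFinset i := by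
    rw [filter_erase, ← G.neighborFinset_eq_filter,
      erase_eq_of_notMem (G.notMem_neighborFinset_self i)]
  rw [hsplit, hsplit z, sum_congr rfl fun j hj => topple_apply_of_ne z (ne_of_mem_erase hj),
    sum_add_distrib, sum_boole, Nat.cast_id, hnbrs, G.card_neighborFinset_eq_degree,
    topple_apply_self]
  omega

end Toppling

section LegalSequence

variable [Fintype V] [DecidableEq V] {G : SimpleGraph V} [DecidableRel G.Adj]
  {z : V → ℕ} {f : ℕ → V}

theorem sum_confSeq (hf : ∀ k, G.degree (f k) ≤ confSeq G z f k (f k)) (n : ℕ) :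
    ∑ v, confSeq G z f n v = ∑ v, z v := by
  induction n with
  | zero => rfl
  | succ n ih => rw [confSeq, sum_topple (hf n), ih]

theorem confSeq_le_sum (hf : ∀ k, G.degree (f k) ≤ confSeq G z f k (f k)) (n : ℕ) (v : V) :
    confSeq G z f n v ≤ ∑ w, z w :=
  sum_confSeq hf n ▸ single_le_sum (fun _ _ => Nat.zero_le _) (mem_univ v)

theorem confSeq_le_confSeq {v : V} {n m : ℕ} (hv : ∀ k, n ≤ k → f k ≠ v) (hnm : n ≤ m) :
    confSeq G z f n v ≤ confSeq G z f m v := by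
  induction m, hnm using Nat.le_induction with
  | base => exact le_rfl
  | succ m hnm ih =>
    rw [confSeq, topple_apply_of_ne _ (hv m hnm).symm]
    omega

theorem infinite_topplings_of_adj (hf : ∀ k, G.degree (f k) ≤ confSeq G z f k (f k))
    {u v : V} (huv : G.Adj u v) (hu : {k | f k = u}.Infinite) : {k | f k = v}.Infinite := by
  intro hv
  obtain ⟨N, hN⟩ : ∃ N, ∀ k, N ≤ k → f k ≠ v := by
    obtain ⟨M, hM⟩ := hv.bddAbove
    exact ⟨M + 1, fun k hk hkv => by have := hM hkv; omega⟩
  have hgrow (m : ℕ) : ∃ n, N ≤ n ∧ m ≤ confSeq G z f n v := by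
    induction m with
    | zero => exact ⟨N, le_rfl, Nat.zero_le _⟩
    | succ m ih =>
      obtain ⟨n, hNn, hm⟩ := ih
      obtain ⟨k, hku, hnk⟩ := hu.exists_gt n
      have hmono := confSeq_le_confSeq (G := G) (z := z) (fun j hj => hN j (by omega)) hnk.le
      have hgain : confSeq G z f (k + 1) v = confSeq G z f k v + 1 := by
        rw [confSeq, topple_apply_of_ne _ (hN k (by omega)).symm, hku, if_pos huv]
      exact ⟨k + 1, by omega, by omega⟩
  obtain ⟨n, -, hn⟩ := hgrow (∑ w, z w + 1)
  have := confSeq_le_sum hf n v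
  omega

theorem infinite_topplings_of_connected (hconn : G.Connected)
    (hf : ∀ k, G.degree (f k) ≤ confSeq G z f k (f k)) (v : V) : {k | f k = v}.Infinite := by
  obtain ⟨u, hu⟩ := Finite.exists_infinite_fiber f
  exact (hconn u v).of_forall_adj (fun _ _ hab => infinite_topplings_of_adj hf hab)
    (Set.infinite_coe_iff.mp hu)

theorem not_exists_infinite_legal (hconn : G.Connected) (s : V) (z : V → ℕ) :
    ¬ ∃ f : ℕ → V, ∀ k, f k ≠ s ∧ G.degree (f k) ≤ confSeq G z f k (f k) := by
  rintro ⟨f, hf⟩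
  obtain ⟨k, hk⟩ := (infinite_topplings_of_connected hconn (fun k => (hf k).2) s).nonempty
  exact (hf k).1 hk

end LegalSequence

def LegalStep (G : SimpleGraph V) [G.LocallyFinite] [DecidableEq V] [DecidableRel G.Adj]
    (s : V) (z z' : V → ℕ) : Prop :=
  ∃ i, i ≠ s ∧ G.degree i ≤ z i ∧ topple G z i = z'

section Stabilization

variable {G : SimpleGraph V} [DecidableEq V] [DecidableRel G.Adj]

theorem wellFounded_flip_legalStep [Fintype V] (hconn : G.Connected) (s : V) :
    WellFounded (flip (LegalStep G s)) := by
  rw [wellFounded_iff_isEmpty_descending_chain]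
  refine ⟨fun ⟨c, hc⟩ => ?_⟩
  choose i hi_ne hi_deg hi_eq using hc
  have hconf (n : ℕ) : confSeq G (c 0) i n = c n := by
    induction n with
    | zero => rfl
    | succ n ih => rw [confSeq, ih, hi_eq]
  exact not_exists_infinite_legal hconn s (c 0)
    ⟨i, fun k => ⟨hi_ne k, hconf k ▸ hi_deg k⟩⟩

theorem exists_legalSeq_stable [G.LocallyFinite] {s : V}
    (hwf : WellFounded (flip (LegalStep G s))) (z : V → ℕ) :
    ∃ L : List V, LegalSeq G s z L ∧
      ∀ v, v ≠ s → L.foldl (topple G) z v < G.degree v := by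
  induction z using hwf.induction with
  | _ z ih =>
    by_cases hunstable : ∃ i, i ≠ s ∧ G.degree i ≤ z i
    · obtain ⟨i, hi, hdeg⟩ := hunstable
      obtain ⟨L, hL, hstable⟩ := ih (topple G z i) ⟨i, hi, hdeg, rfl⟩
      exact ⟨i :: L, ⟨hi, hdeg, hL⟩, hstable⟩
    · push Not at hunstable
      exact ⟨[], trivial, hunstable⟩

end Stabilization

theorem stabilization_general [Fintype V] [DecidableEq V]
    (G : SimpleGraph V) [DecidableRel G.Adj]
    (hconn : G.Connected) (s : V) (z : V → ℕ) :
    (¬ ∃ f : ℕ → V, ∀ k, f k ≠ s ∧ G.degree (f k) ≤ confSeq G z f k (f k)) ∧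
    (∃ L : List V, LegalSeq G s z L ∧
      ∀ v, v ≠ s → L.foldl (topple G) z v < G.degree v) :=
  ⟨not_exists_infinite_legal hconn s z,
    exists_legalSeq_stable (wellFounded_flip_legalStep hconn s) z⟩

/-- On a finite connected simple graph with at least two vertices and a sink `s`,
there is no infinite legal toppling sequence from any configuration `z`;
consequently every configuration stabilizes after finitely many topplings: there
is a complete legal toppling sequence from `z` whose final configuration is
stable at every vertex other than `s`. -/
theorem stabilization [Fintype V] [DecidableEq V]
    (G : SimpleGraph V) [DecidableRel G.Adj]
    (hconn : G.Connected) (hcard : 1 < Fintype.card V) (s : V) (z : V → ℕ) :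
    (¬ ∃ f : ℕ → V, ∀ k, f k ≠ s ∧ G.degree (f k) ≤ confSeq G z f k (f k)) ∧
    (∃ L : List V, LegalSeq G s z L ∧
      ∀ v, v ≠ s → L.foldl (topple G) z v < G.degree v) :=
  stabilization_general G hconn s z
end

section
/- Let G be an infinite, connected, locally finite simple graph on a vertex set V, and let z : V → ℕ be a sandpile configuration with finite support (a finite number of particles). Then every legal toppling sequence from z is finite: all vertices become stable after a finite number of topplings. -/
variable {V : Type*}

/-! Along a legal toppling sequence the total number `N` of particles is conserved. Of two
adjacent vertices, one of which has toppled, the one whose last toppling came first still holds a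
particle received from the other since then; as every vertex has a neighbour, this charges at least
half a particle to each toppled vertex, so at most `2 * N` distinct vertices ever topple. Some
vertex therefore topples infinitely often. Its neighbours receive infinitely many particles but
hold at most `N`, so they topple infinitely often too; by connectedness every vertex of the
infinite graph topples, a contradiction. -/

open Finset

lemma finite_range_of_card_image_range_le {α : Type*} [DecidableEq α] {f : ℕ → α} {B : ℕ}
    (h : ∀ T, #((range T).image f) ≤ B) : (Set.range f).Finite := by
  by_contra hinf
  obtain ⟨F, hF, hcard⟩ := Set.Infinite.exists_subset_card_eq hinf (B + 1)
  rw [← Set.image_univ, subset_set_image_iff] at hF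
  obtain ⟨s, -, rfl⟩ := hF
  have := (card_le_card (image_subset_image (subset_range_sup_succ s))).trans (h _)
  omega

lemma exists_infinite_setOf_eq_of_finite_range {α : Type*} {f : ℕ → α}
    (h : (Set.range f).Finite) : ∃ x, {k | f k = x}.Infinite := by
  by_contra! hfin
  exact Set.infinite_univ <| (h.biUnion fun x _ => hfin x).subset fun k _ =>
    Set.mem_biUnion (Set.mem_range_self k) rfl

lemma SimpleGraph.Reachable.mem_of_adj_imp {G : SimpleGraph V} {s : Set V}
    (hs : ∀ ⦃x y⦄, G.Adj x y → x ∈ s → y ∈ s) {u v : V} (huv : G.Reachable u v)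
    (hu : u ∈ s) : v ∈ s := by
  obtain ⟨p⟩ := huv
  induction p with
  | nil => exact hu
  | cons h _ ih => exact ih (hs h hu)

section Toppling

variable (G : SimpleGraph V) [G.LocallyFinite] [DecidableEq V] [DecidableRel G.Adj]

lemma topple_of_ne {w : V → ℕ} {i u : V} (hu : u ≠ i) :
    topple G w i u = w u + if G.Adj i u then 1 else 0 := by
  simp only [topple, if_neg hu]
  split_ifs <;> rfl

lemma topple_add_ite_eq {w : V → ℕ} {i : V} (hi : G.degree i ≤ w i) (u : V) :
    topple G w i u + (if i = u then G.degree u else 0) = w u + if G.Adj i u then 1 else 0 := by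
  by_cases hu : u = i
  · subst hu
    simp [topple, Nat.sub_add_cancel hi]
  · simp [topple_of_ne G hu, Ne.symm hu]

lemma sum_topple_eq {w : V → ℕ} {i : V} (hi : G.degree i ≤ w i) {B : Finset V}
    (hB : insert i (G.neighborFinset i) ⊆ B) :
    ∑ u ∈ B, topple G w i u = ∑ u ∈ B, w u := by
  have hsum := sum_congr rfl fun u (_ : u ∈ B) => topple_add_ite_eq G hi u
  have hnbr : {u ∈ B | G.Adj i u} = G.neighborFinset i := by
    ext u
    simp only [mem_filter, SimpleGraph.mem_neighborFinset, and_iff_right_iff_imp]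
    exact fun h => hB (mem_insert_of_mem ((G.mem_neighborFinset i u).mpr h))
  rw [sum_add_distrib, sum_add_distrib, sum_ite_eq B i, if_pos (hB (mem_insert_self _ _)),
    sum_boole, hnbr, Nat.cast_id, G.card_neighborFinset_eq_degree] at hsum
  omega

end Toppling

section Retention

variable {G : SimpleGraph V} [DecidableEq V] [DecidableRel G.Adj] {f : ℕ → V}

variable (G) in
def arrivalsSinceLastTopple (f : ℕ → V) (T : ℕ) (w : V) : Finset ℕ :=
  {k ∈ range T | G.Adj (f k) w ∧ ∀ j ∈ Ico k T, f j ≠ w}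

lemma card_arrivalsSinceLastTopple_le [G.LocallyFinite] (z : V → ℕ) (T : ℕ) (w : V) :
    #(arrivalsSinceLastTopple G f T w) ≤ confSeq G z f T w := by
  induction T with
  | zero => simp [arrivalsSinceLastTopple]
  | succ T ih =>
    by_cases hw : f T = w
    · suffices arrivalsSinceLastTopple G f (T + 1) w = ∅ by simp [this]
      refine filter_eq_empty_iff.mpr fun k hk ⟨_, hlast⟩ => hlast T ?_ hw
      simpa [Nat.lt_succ_iff] using hk
    · let latest : Finset ℕ := {k ∈ {T} | G.Adj (f k) w}
      have hsub : arrivalsSinceLastTopple G f (T + 1) w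
          ⊆ arrivalsSinceLastTopple G f T w ∪ latest := by
        intro k hk
        simp only [arrivalsSinceLastTopple, mem_filter, mem_range, mem_Ico, mem_union] at hk ⊢
        obtain ⟨hkT, hadj, hlast⟩ := hk
        rcases Nat.lt_succ_iff_lt_or_eq.mp hkT with hk | rfl
        · exact .inl ⟨hk, hadj, fun j hj => hlast j ⟨hj.1, hj.2.trans T.lt_succ_self⟩⟩
        · exact .inr (mem_filter.mpr ⟨mem_singleton_self _, hadj⟩)
      have hconf : confSeq G z f (T + 1) w = confSeq G z f T w + if G.Adj (f T) w then 1 else 0 :=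
        topple_of_ne G (Ne.symm hw)
      calc #(arrivalsSinceLastTopple G f (T + 1) w)
          ≤ #(arrivalsSinceLastTopple G f T w) + #latest :=
            (card_le_card hsub).trans (card_union_le _ _)
        _ ≤ confSeq G z f (T + 1) w := by
            rw [hconf, show latest = _ from filter_singleton _ _]
            split_ifs <;> simp [ih]

lemma mem_image_arrivalsSinceLastTopple {x y : V} (hxy : G.Adj x y) {m T : ℕ} (hm : m < T)
    (hx : f m = x) (hy : ∀ j ∈ Ioo m T, f j ≠ y) :
    x ∈ (arrivalsSinceLastTopple G f T y).image f := by
  refine mem_image.mpr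
    ⟨m, mem_filter.mpr ⟨mem_range.mpr hm, hx ▸ hxy, fun j hj => ?_⟩, hx⟩
  rcases (mem_Ico.mp hj).1.eq_or_lt with rfl | hmj
  · exact hx ▸ hxy.ne
  · exact hy j (mem_Ioo.mpr ⟨hmj, (mem_Ico.mp hj).2⟩)

lemma mem_image_arrivalsSinceLastTopple_or {x y : V} (hxy : G.Adj x y) {T : ℕ}
    (hx : x ∈ (range T).image f) :
    x ∈ (arrivalsSinceLastTopple G f T y).image f ∨
      y ∈ (arrivalsSinceLastTopple G f T x).image f := by
  let M := {k ∈ range T | f k = x ∨ f k = y}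
  have hM : M.Nonempty := by
    obtain ⟨k, hk, rfl⟩ := mem_image.mp hx
    exact ⟨k, mem_filter.mpr ⟨hk, .inl rfl⟩⟩
  obtain ⟨hmT, hm⟩ := mem_filter.mp (M.max'_mem hM)
  have hlast : ∀ j ∈ Ioo (M.max' hM) T, f j ≠ x ∧ f j ≠ y := fun j hj => by
    have := mt (M.le_max' j) (mem_Ioo.mp hj).1.not_ge
    simp_all [M]
  rcases hm with hm | hm
  · exact .inl <| mem_image_arrivalsSinceLastTopple hxy (mem_range.mp hmT) hm
      fun j hj => (hlast j hj).2
  · exact .inr <| mem_image_arrivalsSinceLastTopple hxy.symm (mem_range.mp hmT) hm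
      fun j hj => (hlast j hj).1

lemma card_le_sum_confSeq_of_mem_image_arrivals [G.LocallyFinite] (z : V → ℕ) {T : ℕ}
    {P : Finset (V × V)}
    (hP : ∀ p ∈ P, p.2 ∈ (arrivalsSinceLastTopple G f T p.1).image f) :
    #P ≤ ∑ w ∈ P.image Prod.fst, confSeq G z f T w :=
  calc #P = ∑ w ∈ P.image Prod.fst, #{p ∈ P | p.1 = w} :=
        card_eq_sum_card_fiberwise fun p hp => mem_image_of_mem _ hp
    _ ≤ ∑ w ∈ P.image Prod.fst, #((arrivalsSinceLastTopple G f T w).image f) := by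
        refine sum_le_sum fun w _ => card_le_card_of_injOn Prod.snd ?_ ?_
        · intro p hp
          obtain ⟨hpP, rfl⟩ := mem_filter.mp hp
          exact hP p hpP
        · intro p hp q hq hpq
          exact Prod.ext ((mem_filter.mp hp).2.trans (mem_filter.mp hq).2.symm) hpq
    _ ≤ ∑ w ∈ P.image Prod.fst, confSeq G z f T w :=
        sum_le_sum fun w _ => card_image_le.trans (card_arrivalsSinceLastTopple_le z T w)

end Retention

section Legal

variable {G : SimpleGraph V} [G.LocallyFinite] [DecidableEq V] [DecidableRel G.Adj]

variable (G) in
def IsLegalToppling (z : V → ℕ) (f : ℕ → V) : Prop :=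
  ∀ k, G.degree (f k) ≤ confSeq G z f k (f k)

variable {z : V → ℕ} {f : ℕ → V} {K : Finset V}

lemma IsLegalToppling.sum_confSeq_le (hf : IsLegalToppling G z f)
    (hK : Function.support z ⊆ K) (t : ℕ) (A : Finset V) :
    ∑ x ∈ A, confSeq G z f t x ≤ ∑ x ∈ K, z x := by
  induction t generalizing A with
  | zero => exact sum_le_sum_of_ne_zero fun x _ hx => hK hx
  | succ t ih =>
    let B := A ∪ insert (f t) (G.neighborFinset (f t))
    calc ∑ x ∈ A, confSeq G z f (t + 1) x ≤ ∑ x ∈ B, confSeq G z f (t + 1) x :=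
          sum_le_sum_of_subset subset_union_left
      _ = ∑ x ∈ B, confSeq G z f t x := sum_topple_eq G (hf t) subset_union_right
      _ ≤ ∑ x ∈ K, z x := ih B

lemma IsLegalToppling.confSeq_add_degree_mul_count (hf : IsLegalToppling G z f) (u : V)
    (t : ℕ) : confSeq G z f t u + G.degree u * Nat.count (f · = u) t
      = z u + Nat.count (fun k => G.Adj (f k) u) t := by
  induction t with
  | zero => simp [confSeq]
  | succ t ih =>
    have hstep := topple_add_ite_eq G (hf t) u
    rw [Nat.count_succ, Nat.count_succ, mul_add, mul_ite, mul_one, mul_zero]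
    change topple G (confSeq G z f t) (f t) u + _ = _
    omega

lemma IsLegalToppling.card_image_range_le (hf : IsLegalToppling G z f)
    (hK : Function.support z ⊆ K) (hadj : ∀ x, ∃ y, G.Adj x y) (T : ℕ) :
    #((range T).image f) ≤ 2 * ∑ x ∈ K, z x := by
  choose y hy using hadj
  let S := (range T).image f
  let R := fun w => (arrivalsSinceLastTopple G f T w).image f
  -- `g x` is (receiver, sender) of a particle still held on the edge `x, y x`; it is at most
  -- two-to-one.
  let g : V → V × V := fun x => if x ∈ R (y x) then (y x, x) else (x, y x)
  have hg : ∀ p ∈ S.image g, p.2 ∈ R p.1 := by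
    intro p hp
    obtain ⟨x, hx, rfl⟩ := mem_image.mp hp
    by_cases h : x ∈ R (y x)
    · simp only [g, if_pos h]
      exact h
    · simp only [g, if_neg h]
      exact (mem_image_arrivalsSinceLastTopple_or (hy x) hx).resolve_left h
  have hfiber : ∀ p ∈ S.image g, #{x ∈ S | g x = p} ≤ 2 := fun p _ =>
    calc #{x ∈ S | g x = p} ≤ #{p.1, p.2} := card_le_card fun x hx => by
          obtain ⟨-, rfl⟩ := mem_filter.mp hx
          by_cases h : x ∈ R (y x) <;> simp [g, h]
      _ ≤ 2 := card_le_two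
  calc #S ≤ 2 * #(S.image g) := card_le_mul_card_image S 2 hfiber
    _ ≤ 2 * ∑ x ∈ K, z x := Nat.mul_le_mul_left 2 <|
        (card_le_sum_confSeq_of_mem_image_arrivals z hg).trans (hf.sum_confSeq_le hK T _)

lemma IsLegalToppling.infinite_setOf_eq_of_adj (hf : IsLegalToppling G z f)
    (hK : Function.support z ⊆ K) {x y : V} (hxy : G.Adj x y) (hx : {k | f k = x}.Infinite) :
    {k | f k = y}.Infinite := by
  intro hy
  let C := #hy.toFinset
  let t := Nat.nth (f · = x) (∑ v ∈ K, z v + G.degree y * C) + 1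
  have hcount_x : Nat.count (f · = x) t = ∑ v ∈ K, z v + G.degree y * C + 1 :=
    Nat.count_nth_succ_of_infinite hx _
  have harrivals : Nat.count (f · = x) t ≤ Nat.count (fun k => G.Adj (f k) y) t :=
    Nat.count_mono_left fun k _ hk => hk ▸ hxy
  have hcount_y : G.degree y * Nat.count (f · = y) t ≤ G.degree y * C :=
    Nat.mul_le_mul_left _ (Nat.count_le_card hy t)
  have hconf : confSeq G z f t y ≤ ∑ v ∈ K, z v := by
    simpa using hf.sum_confSeq_le hK t {y}
  have := hf.confSeq_add_degree_mul_count y t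
  omega

end Legal

/-- On an infinite, connected, locally finite simple graph, every legal toppling
sequence from a configuration with finitely many particles is finite: there is
no infinite legal toppling sequence, so all vertices become stable after a
finite number of topplings. -/
theorem no_infinite_toppling_of_finite_support [Infinite V] [DecidableEq V]
    (G : SimpleGraph V) [G.LocallyFinite] [DecidableRel G.Adj]
    (hconn : G.Connected) (z : V → ℕ) (hz : (Function.support z).Finite) :
    ¬ ∃ f : ℕ → V, ∀ k, G.degree (f k) ≤ confSeq G z f k (f k) := by
  rintro ⟨f, hf : IsLegalToppling G z f⟩
  have hK : Function.support z ⊆ hz.toFinset := by simp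
  have hfin : (Set.range f).Finite := finite_range_of_card_image_range_le
    (hf.card_image_range_le hK hconn.preconnected.exists_adj_of_nontrivial)
  obtain ⟨x, hx⟩ := exists_infinite_setOf_eq_of_finite_range hfin
  have hall (v : V) : {k | f k = v}.Infinite :=
    (hconn.preconnected x v).mem_of_adj_imp (fun _ _ h => hf.infinite_setOf_eq_of_adj hK h) hx
  exact Set.infinite_univ <| hfin.subset fun v _ => (hall v).nonempty
end
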